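/- Let A be the 3×3 matrix with first row (φ_0(t_0), φ_1(t_0), φ_2(t_0)) and rows two and three ((−i)^j φ_j(ω_k))_{j=0,1,2} for k = 0, 1. Then det(A) = C (ω_0 − ω_1)(t_0² − ω_0 ω_1 − 1 + i t_0 (ω_0 + ω_1)) for some nonzero factor C depending only on t_0, ω_0, ω_1 (a product of nonzero Gaussians and constants). -/
import Mathlib

/-- `φ_0(x) = π^{-1/4} e^{-x²/2}`. -/
noncomputable def phi0 (x : ℝ) : ℝ :=
  Real.pi ^ (-(1 : ℝ)/4) * Real.exp (-x ^ 2 / 2)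

/-- `φ_1(x) = π^{-1/4} √2 x e^{-x²/2}`. -/
noncomputable def phi1 (x : ℝ) : ℝ :=
  Real.pi ^ (-(1 : ℝ)/4) * Real.sqrt 2 * x * Real.exp (-x ^ 2 / 2)

/-- `φ_2(x) = π^{-1/4} 2^{-1/2} (2x² − 1) e^{-x²/2}`. -/
noncomputable def phi2 (x : ℝ) : ℝ :=
  Real.pi ^ (-(1 : ℝ)/4) * (Real.sqrt 2)⁻¹ * (2 * x ^ 2 - 1) * Real.exp (-x ^ 2 / 2)

lemma phi0_pos (x : ℝ) : 0 < phi0 x := by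
  unfold phi0
  positivity

/-- The `3×3` two-sided sampling matrix for one time sample `t_0` and two frequency
samples `ω_0, ω_1`: its determinant factors as
`C (ω_0 − ω_1)(t_0² − ω_0 ω_1 − 1 + i t_0 (ω_0 + ω_1))` with `C ≠ 0`. -/
theorem stmt_6 (t0 ω0 ω1 : ℝ) :
    ∃ C : ℂ, C ≠ 0 ∧
      (Matrix.of
        ![![(phi0 t0 : ℂ), (phi1 t0 : ℂ), (phi2 t0 : ℂ)],
          ![(phi0 ω0 : ℂ), (-Complex.I) * phi1 ω0, (-Complex.I) ^ 2 * phi2 ω0],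
          ![(phi0 ω1 : ℂ), (-Complex.I) * phi1 ω1, (-Complex.I) ^ 2 * phi2 ω1]]).det
        = C * ((ω0 : ℂ) - ω1) *
            ((t0 : ℂ) ^ 2 - (ω0 : ℂ) * ω1 - 1 + Complex.I * t0 * ((ω0 : ℂ) + ω1)) := by
  refine ⟨2 * Complex.I * ((phi0 t0 : ℂ) * phi0 ω0 * phi0 ω1), ?_, ?_⟩
  · have h0 := (phi0_pos t0).ne'
    have h1 := (phi0_pos ω0).ne'
    have h2 := (phi0_pos ω1).ne'
    simp [Complex.ofReal_ne_zero, h0, h1, h2, Complex.I_ne_zero, mul_ne_zero]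
  · rw [Matrix.det_fin_three]
    simp only [Matrix.of_apply, Matrix.cons_val', Matrix.cons_val_zero, Matrix.cons_val_one,
      Matrix.head_cons, Matrix.empty_val', Matrix.cons_val_fin_one, Matrix.head_fin_const,
      Matrix.cons_val_two, Matrix.tail_cons]
    unfold phi0 phi1 phi2
    have hss : Real.sqrt 2 * Real.sqrt 2 = 2 := Real.mul_self_sqrt (by norm_num)
    have hinv : (Real.sqrt 2)⁻¹ = Real.sqrt 2 / 2 := by
      rw [eq_div_iff (two_ne_zero), inv_mul_eq_div, div_eq_iff (by positivity : Real.sqrt 2 ≠ 0)]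
      linarith [hss]
    rw [hinv]
    set P : ℝ := Real.pi ^ (-(1 : ℝ)/4) with hP
    set A : ℝ := Real.exp (-t0 ^ 2 / 2) with hA
    set B : ℝ := Real.exp (-ω0 ^ 2 / 2) with hB
    set D : ℝ := Real.exp (-ω1 ^ 2 / 2) with hD
    set S : ℝ := Real.sqrt 2 with hS
    push_cast
    set p : ℂ := ((P : ℝ) : ℂ) with hp
    set a : ℂ := ((A : ℝ) : ℂ) with ha
    set b : ℂ := ((B : ℝ) : ℂ) with hb
    set c : ℂ := ((D : ℝ) : ℂ) with hc
    set s : ℂ := ((S : ℝ) : ℂ) with hs'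
    set t : ℂ := ((t0 : ℝ) : ℂ) with ht
    set w0 : ℂ := ((ω0 : ℝ) : ℂ) with hw0
    set w1 : ℂ := ((ω1 : ℝ) : ℂ) with hw1
    have hs : s ^ 2 = 2 := by
      rw [hs', ← Complex.ofReal_pow, hS, sq, hss]; norm_num
    have hI : Complex.I ^ 2 = -1 := Complex.I_sq
    linear_combination
      ((1/2 : ℂ)*p^3*a*b*c*w1*Complex.I + (-1/2 : ℂ)*p^3*a*b*c*w1*Complex.I^3
        + (-1/2 : ℂ)*p^3*a*b*c*w0*Complex.I + (1/2 : ℂ)*p^3*a*b*c*w0*Complex.I^3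
        + (-1 : ℂ)*p^3*a*b*c*w0*w1^2*Complex.I^3 + p^3*a*b*c*w0^2*w1*Complex.I^3
        + (-1 : ℂ)*p^3*a*b*c*t*w1^2*Complex.I^2 + p^3*a*b*c*t*w0^2*Complex.I^2
        + (-1 : ℂ)*p^3*a*b*c*t^2*w1*Complex.I + p^3*a*b*c*t^2*w0*Complex.I) * hs
      + ((-1 : ℂ)*p^3*a*b*c*w1*Complex.I + p^3*a*b*c*w0*Complex.I
        + (-2 : ℂ)*p^3*a*b*c*w0*w1^2*Complex.I + (2 : ℂ)*p^3*a*b*c*w0^2*w1*Complex.I) * hI
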